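/- There do not exist polynomials e₁, h₁, f₁, g₀, f₀, g₁ ∈ F[y²] and u ∈ F[y] such that (1 − y⁴)h₁²u − y²e₁²u = 1; in particular, no u ∈ F satisfies (1 − y⁴)h₁²u = 1 + y²e₁²u with h₁, e₁ ∈ F[y²] not both zero. -/
import Mathlib


open Polynomial

lemma key13 (F : Type*) [Field F] (e h u : Polynomial F) :
    (1 - X ^ 4) * (h.comp (X ^ 2)) ^ 2 * u
      - X ^ 2 * (e.comp (X ^ 2)) ^ 2 * u ≠ 1 := by
  intro heq
  have h4 : ((1 : Polynomial F) - X ^ 4).natDegree = 4 := by compute_degree!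
  have h4ne : ((1 : Polynomial F) - X ^ 4) ≠ 0 := by
    intro h0; rw [h0] at h4; simp at h4
  have hX2ne : (X ^ 2 : Polynomial F) ≠ 0 := by
    exact pow_ne_zero _ X_ne_zero
  set H := h.comp (X ^ 2) with hHdef
  set E := e.comp (X ^ 2) with hEdef
  have hu : u ≠ 0 := by
    intro h0; rw [h0] at heq; simp at heq
  have hHdeg : H.natDegree = 2 * h.natDegree := by
    rw [hHdef, natDegree_comp]; simp [mul_comm]
  have hEdeg : E.natDegree = 2 * e.natDegree := by
    rw [hEdef, natDegree_comp]; simp [mul_comm]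
  by_cases hH : H = 0
  · rw [hH] at heq
    simp only [zero_pow, mul_zero, zero_mul, zero_sub, pow_two] at heq
    by_cases hE : E = 0
    · rw [hE] at heq; simp at heq
    · have : (X ^ 2 * (E * E) * u).natDegree = (1 : Polynomial F).natDegree := by
        rw [show X ^ 2 * (E * E) * u = -(1 : Polynomial F) from by
          rw [← heq]; ring, natDegree_neg]
      rw [natDegree_mul (mul_ne_zero hX2ne (mul_ne_zero hE hE)) hu,
        natDegree_mul hX2ne (mul_ne_zero hE hE), natDegree_mul hE hE,
        natDegree_one, natDegree_X_pow] at this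
      omega
  · by_cases hE : E = 0
    · rw [hE] at heq
      simp only [zero_pow, mul_zero, zero_mul, sub_zero, pow_two] at heq
      have : ((1 - X ^ 4) * (H * H) * u).natDegree = (1 : Polynomial F).natDegree := by
        rw [heq]
      rw [natDegree_mul (mul_ne_zero h4ne (mul_ne_zero hH hH)) hu,
        natDegree_mul h4ne (mul_ne_zero hH hH), natDegree_mul hH hH,
        natDegree_one, h4] at this
      omega
    · -- both nonzero : degree comparison
      have hAne : (1 - X ^ 4) * H ^ 2 * u ≠ 0 :=
        mul_ne_zero (mul_ne_zero h4ne (pow_ne_zero _ hH)) hu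
      have hBne : X ^ 2 * E ^ 2 * u ≠ 0 :=
        mul_ne_zero (mul_ne_zero hX2ne (pow_ne_zero _ hE)) hu
      have hA : ((1 - X ^ 4) * H ^ 2 * u).natDegree = 4 + 2 * H.natDegree + u.natDegree := by
        rw [natDegree_mul (mul_ne_zero h4ne (pow_ne_zero _ hH)) hu,
          natDegree_mul h4ne (pow_ne_zero _ hH), natDegree_pow, h4]
        try ring
      have hB : (X ^ 2 * E ^ 2 * u).natDegree = 2 + 2 * E.natDegree + u.natDegree := by
        rw [natDegree_mul (mul_ne_zero hX2ne (pow_ne_zero _ hE)) hu,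
          natDegree_mul hX2ne (pow_ne_zero _ hE), natDegree_pow]
        simp [natDegree_X]
      have hne : ((1 - X ^ 4) * H ^ 2 * u).natDegree ≠ (X ^ 2 * E ^ 2 * u).natDegree := by
        rw [hA, hB, hHdeg, hEdeg]; omega
      rcases lt_or_gt_of_ne hne with hlt | hgt
      · have := natDegree_sub_eq_right_of_natDegree_lt hlt
        rw [heq, natDegree_one] at this
        rw [hB, hEdeg] at this; omega
      · have := natDegree_sub_eq_left_of_natDegree_lt hgt
        rw [heq, natDegree_one] at this
        rw [hA, hHdeg] at this; omega

/-- There are no `e₁, h₁ ∈ F[y²]` and `u ∈ F[y]` with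
`(1 − y⁴)h₁²u − y²e₁²u = 1`; in particular, no constant `u ∈ F` satisfies
`(1 − y⁴)h₁²u = 1 + y²e₁²u` with `h₁, e₁` not both zero. -/
theorem stmt13 (F : Type*) [Field F] [CharZero F] :
    (¬ ∃ e h u : Polynomial F,
        (1 - X ^ 4) * (h.comp (X ^ 2)) ^ 2 * u
          - X ^ 2 * (e.comp (X ^ 2)) ^ 2 * u = 1) ∧
    (¬ ∃ e h : Polynomial F,
        ¬ (e.comp (X ^ 2) = 0 ∧ h.comp (X ^ 2) = 0) ∧
        ∃ u : F,
          (1 - X ^ 4) * (h.comp (X ^ 2)) ^ 2 * C u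
            = 1 + X ^ 2 * (e.comp (X ^ 2)) ^ 2 * C u) := by
  constructor
  · rintro ⟨e, h, u, heq⟩
    exact key13 F e h u heq
  · rintro ⟨e, h, -, u, heq⟩
    exact key13 F e h (C u) (by linear_combination heq)
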